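/- Let 𝔤 = 𝔤_{3.6} ⊕ 𝔤₁ (sl(2,ℝ)-type) be the 4-dimensional real Lie algebra with basis e₁,...,e₄ and nonzero brackets [e₂,e₃] = e₁, [e₃,e₁] = e₂, [e₁,e₂] = −e₃. A 4×4 real matrix R equals η·Id + D for some η ∈ ℝ and some derivation D of 𝔤 if and only if Rᵢ₄ = R₄ᵢ = 0 for i = 1,2,3, R₂₁ = −R₁₂, R₃₁ = R₁₃, R₃₂ = R₂₃, and R₁₁ = R₂₂ = R₃₃. In this case η = R₁₁. -/

import Mathlib

open Matrix

/-- The Lie bracket of the Lie algebra, in coordinates. -/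
def br (x y : Fin 4 → ℝ) : Fin 4 → ℝ :=
  ![(x 1 * y 2 - x 2 * y 1), (x 2 * y 0 - x 0 * y 2), -(x 0 * y 1 - x 1 * y 0), (0:ℝ)]

/-- `D` (acting via `mulVec`) is a derivation of the bracket. -/
def IsDer (D : Matrix (Fin 4) (Fin 4) ℝ) : Prop :=
  ∀ x y : Fin 4 → ℝ, D.mulVec (br x y) = br (D.mulVec x) y + br x (D.mulVec y)

/- The derivation matrices: `ad` of an element of the `sl(2, ℝ)` factor on `e₁, e₂, e₃`,
plus an arbitrary scalar on the centre `ℝ e₄`. -/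
def derMatrix (a b c d : ℝ) : Matrix (Fin 4) (Fin 4) ℝ :=
  !![0, a, b, 0; -a, 0, c, 0; b, c, 0, 0; 0, 0, 0, d]

theorem isDer_derMatrix (a b c d : ℝ) : IsDer (derMatrix a b c d) := by
  intro x y
  ext i
  fin_cases i <;> simp [br, derMatrix, mulVec, dotProduct, Fin.sum_univ_four] <;> ring

/- Apply the derivation rule to the pairs `(e₂, e₃)`, `(e₃, e₁)`, `(e₁, e₂)`, `(e₂, e₄)`, `(e₁, e₄)`:
`e₄` must go to the centre, the image of `[𝔤, 𝔤]` stays in it, and the three brackets of the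
`sl(2, ℝ)` factor force the remaining entries. -/
theorem IsDer.eq_derMatrix {D : Matrix (Fin 4) (Fin 4) ℝ} (hD : IsDer D) :
    D = derMatrix (D 0 1) (D 0 2) (D 1 2) (D 3 3) := by
  have h₂₃ := congrFun (hD ![0, 1, 0, 0] ![0, 0, 1, 0])
  have h₃₁ := congrFun (hD ![0, 0, 1, 0] ![1, 0, 0, 0])
  have h₁₂ := congrFun (hD ![1, 0, 0, 0] ![0, 1, 0, 0])
  have h₂₄ := congrFun (hD ![0, 1, 0, 0] ![0, 0, 0, 1])
  have h₁₄ := congrFun (hD ![1, 0, 0, 0] ![0, 0, 0, 1])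
  have := h₂₃ 0; have := h₂₃ 1; have := h₂₃ 2; have := h₂₃ 3
  have := h₃₁ 0; have := h₃₁ 1; have := h₃₁ 2; have := h₃₁ 3
  have := h₁₂ 0; have := h₁₂ 1; have := h₁₂ 2; have := h₁₂ 3
  have := h₂₄ 0; have := h₂₄ 2; have := h₁₄ 1; have := h₁₄ 2
  simp [br, mulVec, dotProduct, Fin.sum_univ_four] at *
  ext i j
  fin_cases i <;> fin_cases j <;> simp [derMatrix] <;> linarith

theorem stmt_9 (R : Matrix (Fin 4) (Fin 4) ℝ) :
    ((∃ (η : ℝ) (D : Matrix (Fin 4) (Fin 4) ℝ), IsDer D ∧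
        R = η • (1 : Matrix (Fin 4) (Fin 4) ℝ) + D) ↔
      (R 0 3 = 0 ∧ R 1 3 = 0 ∧ R 2 3 = 0 ∧ R 3 0 = 0 ∧ R 3 1 = 0 ∧ R 3 2 = 0 ∧ R 1 0 = -R 0 1 ∧ R 2 0 = R 0 2 ∧ R 2 1 = R 1 2 ∧ R 0 0 = R 1 1 ∧ R 1 1 = R 2 2)) ∧
    (∀ (η : ℝ) (D : Matrix (Fin 4) (Fin 4) ℝ), IsDer D →
      R = η • (1 : Matrix (Fin 4) (Fin 4) ℝ) + D → η = R 0 0) := by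
  refine ⟨⟨?_, ?_⟩, ?_⟩
  · rintro ⟨η, D, hD, rfl⟩
    rw [hD.eq_derMatrix]
    simp [derMatrix, one_apply]
  · rintro ⟨h03, h13, h23, h30, h31, h32, h10, h20, h21, h00, h11⟩
    refine ⟨R 0 0, derMatrix (R 0 1) (R 0 2) (R 1 2) (R 3 3 - R 0 0), isDer_derMatrix _ _ _ _, ?_⟩
    ext i j
    fin_cases i <;> fin_cases j <;> simp [derMatrix, one_apply, *]
  · rintro η D hD rfl
    rw [hD.eq_derMatrix]
    simp [derMatrix]
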